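/- arXiv:math/0610607 — 6 statements merged into one kernel-verified Lean document; each statement's English description precedes it below -/
import Mathlib

section
/- With the sequence d₀ = gcd(a, m), mᵢ = m₍ᵢ₋₁₎/dᵢ, d₍ᵢ₊₁₎ = gcd(dᵢ, mᵢ), and s the least index with d_s = 1, one has gcd(a₀, m_s) = 1 where a₀ = a / d₀. -/
def dm (a : ℤ) (m : ℕ) : ℕ → ℕ × ℕ
  | 0 => (Int.gcd a m, m / Int.gcd a m)
  | i + 1 =>
      let p := dm a m i
      let d := Nat.gcd p.1 p.2
      (d, p.2 / d)

lemma dm_snd_mono (a : ℤ) (m : ℕ) : ∀ i j, i ≤ j → (dm a m j).2 ∣ (dm a m i).2 := by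
  intro i j h
  induction j with
  | zero => simp [Nat.le_zero.mp h]
  | succ n ih =>
    rcases Nat.lt_or_ge i (n + 1) with h1 | h2
    · refine dvd_trans ?_ (ih (Nat.lt_succ_iff.mp h1))
      show (dm a m n).2 / Nat.gcd (dm a m n).1 (dm a m n).2 ∣ (dm a m n).2
      exact Nat.div_dvd_of_dvd (Nat.gcd_dvd_right _ _)
    · have : i = n + 1 := le_antisymm h h2
      subst this; rfl

theorem stmt4 (a : ℤ) (m : ℕ) (hm : 0 < m) (s : ℕ)
    (hs : (dm a m s).1 = 1) (hleast : ∀ t < s, (dm a m t).1 ≠ 1) :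
    Int.gcd (a / (Int.gcd a m : ℤ)) ((dm a m s).2 : ℤ) = 1 := by
  set g := Int.gcd (a / (Int.gcd a m : ℤ)) ((dm a m s).2 : ℤ) with hg
  have hd0 : (Int.gcd a m : ℤ) ∣ a := Int.gcd_dvd_left _ _
  have hga0 : (g : ℤ) ∣ a / (Int.gcd a m : ℤ) := Int.gcd_dvd_left _ _
  have hgms' : (g : ℤ) ∣ ((dm a m s).2 : ℤ) := Int.gcd_dvd_right _ _
  have hgms : g ∣ (dm a m s).2 := Int.ofNat_dvd.mp hgms'
  have hga : (g : ℤ) ∣ a := by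
    refine dvd_trans hga0 ⟨(Int.gcd a m : ℤ), ?_⟩
    rw [Int.ediv_mul_cancel hd0]
  -- g divides m_i for all i ≤ s
  have hgmi : ∀ i ≤ s, g ∣ (dm a m i).2 := fun i hi =>
    dvd_trans hgms (dm_snd_mono a m i s hi)
  have hgm : g ∣ m := by
    refine dvd_trans (hgmi 0 (Nat.zero_le _)) ?_
    show m / Int.gcd a m ∣ m
    refine Nat.div_dvd_of_dvd (Int.ofNat_dvd.mp ?_)
    exact_mod_cast (Int.gcd_dvd_right _ _ : (Int.gcd a m : ℤ) ∣ (m : ℤ))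
  have hgd : ∀ i ≤ s, g ∣ (dm a m i).1 := by
    intro i hi
    induction i with
    | zero =>
      show g ∣ Int.gcd a m
      have : (g : ℤ) ∣ (Int.gcd a m : ℤ) := Int.dvd_coe_gcd hga (Int.ofNat_dvd.mpr hgm)
      exact Int.ofNat_dvd.mp this
    | succ n ih =>
      show g ∣ Nat.gcd (dm a m n).1 (dm a m n).2
      exact Nat.dvd_gcd (ih (Nat.le_of_succ_le hi)) (hgmi n (Nat.le_of_succ_le hi))
  have := hgd s le_rfl
  rw [hs] at this
  exact Nat.eq_one_of_dvd_one this
end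

section
/- With the sequence d₀ = gcd(a, m), mᵢ = m₍ᵢ₋₁₎/dᵢ, d₍ᵢ₊₁₎ = gcd(dᵢ, mᵢ), and s the least index with d_s = 1, for each i with 0 ≤ i ≤ s−1 the cofactor dᵢ' = dᵢ / d₍ᵢ₊₁₎ satisfies gcd(dᵢ', m_s) = 1. -/
lemma dm_succ (a : ℤ) (m i : ℕ) :
    dm a m (i + 1) = (Nat.gcd (dm a m i).1 (dm a m i).2,
      (dm a m i).2 / Nat.gcd (dm a m i).1 (dm a m i).2) :=
  rfl

lemma dm_snd_pos {a : ℤ} {m : ℕ} (hm : 0 < m) (i : ℕ) : 0 < (dm a m i).2 := by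
  induction i with
  | zero =>
    have hdvd : Int.gcd a m ∣ m := Nat.gcd_dvd_right a.natAbs m
    exact Nat.div_pos (Nat.le_of_dvd hm hdvd)
      (Int.gcd_pos_of_ne_zero_right a (by exact_mod_cast hm.ne'))
  | succ i ih =>
    rw [dm_succ]
    exact Nat.div_pos (Nat.le_of_dvd ih (Nat.gcd_dvd_right _ _)) (Nat.gcd_pos_of_pos_right _ ih)

lemma dm_snd_succ_dvd (a : ℤ) (m i : ℕ) : (dm a m (i + 1)).2 ∣ (dm a m i).2 :=
  Nat.div_dvd_of_dvd (Nat.gcd_dvd_right _ _)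

lemma dm_snd_dvd_of_le (a : ℤ) (m : ℕ) {i j : ℕ} (hij : i ≤ j) : (dm a m j).2 ∣ (dm a m i).2 := by
  induction hij with
  | refl => exact dvd_rfl
  | step _ ih => exact (dm_snd_succ_dvd a m _).trans ih

lemma coprime_dm_fst_div_dm_snd_succ {a : ℤ} {m : ℕ} (hm : 0 < m) (i : ℕ) :
    Nat.Coprime ((dm a m i).1 / (dm a m (i + 1)).1) (dm a m (i + 1)).2 :=
  Nat.coprime_div_gcd_div_gcd (Nat.gcd_pos_of_pos_right _ (dm_snd_pos hm i))

theorem stmt5_general (a : ℤ) (m : ℕ) (hm : 0 < m) (s : ℕ) :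
    ∀ i < s, Nat.gcd ((dm a m i).1 / (dm a m (i + 1)).1) (dm a m s).2 = 1 :=
  fun i hi => (coprime_dm_fst_div_dm_snd_succ hm i).coprime_dvd_right (dm_snd_dvd_of_le a m hi)

theorem stmt5 (a : ℤ) (m : ℕ) (hm : 0 < m) (s : ℕ)
    (hs : (dm a m s).1 = 1) (hleast : ∀ t < s, (dm a m t).1 ≠ 1) :
    ∀ i < s, Nat.gcd ((dm a m i).1 / (dm a m (i + 1)).1) (dm a m s).2 = 1 :=
  stmt5_general a m hm s
end

section
/- Let a, m be integers with m ≠ 0. Then there exist a natural number s and a positive integer m_s dividing m such that a^(φ(m_s) + s) ≡ a^s (mod m), where φ is Euler's totient function. -/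
/-!
Write `|m| = u * v` with `u = gcd(|m|, |a|^|m|)`. Every prime `p` dividing `a` has
`p ^ v_p(|m|) ∣ p ^ |m| ∣ |a| ^ |m|`, so the whole `p`-part of `|m|` lies in `u` and `v` is
coprime to `a`. Then `u ∣ a ^ |m|` and, by Euler, `v ∣ a ^ φ(v) - 1`, whence
`|m| ∣ a ^ |m| * (a ^ φ(v) - 1)`: the theorem holds with `s = |m|` and `m_s = v`.
-/

open scoped Nat

theorem Nat.coprime_div_gcd_pow_self {a n : ℕ} (hn : n ≠ 0) :
    Nat.Coprime a (n / n.gcd (a ^ n)) := by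
  refine Nat.coprime_of_dvd fun p hp hpa hpv => Nat.pow_succ_factorization_not_dvd hn hp ?_
  have hp_part : p ^ n.factorization p ∣ n.gcd (a ^ n) :=
    Nat.dvd_gcd (Nat.ordProj_dvd n p)
      ((pow_dvd_pow p (Nat.factorization_lt p hn).le).trans (pow_dvd_pow_of_dvd hpa n))
  calc p ^ (n.factorization p + 1) ∣ n.gcd (a ^ n) * (n / n.gcd (a ^ n)) :=
        pow_succ p _ ▸ mul_dvd_mul hp_part hpv
    _ = n := Nat.mul_div_cancel' (Nat.gcd_dvd_left n (a ^ n))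

theorem Int.ModEq.pow_totient {x : ℤ} {n : ℕ} (h : IsCoprime x n) : x ^ φ n ≡ 1 [ZMOD n] := by
  rw [← ZMod.intCast_eq_intCast_iff, Int.cast_pow, Int.cast_one,
    ← ZMod.coe_unitOfIsCoprime x h, ← Units.val_pow_eq_pow_val, ZMod.pow_totient,
    Units.val_one]

theorem Int.pow_totient_add_modEq {a u : ℤ} {v s : ℕ} (hu : u ∣ a ^ s) (hv : IsCoprime a v) :
    a ^ (φ v + s) ≡ a ^ s [ZMOD u * v] := by
  rw [Int.modEq_comm, Int.modEq_iff_dvd, pow_add, ← sub_one_mul, mul_comm _ (a ^ s)]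
  exact mul_dvd_mul hu (Int.ModEq.pow_totient hv).symm.dvd

theorem stmt6 (a m : ℤ) (hm : m ≠ 0) :
    ∃ (s : ℕ) (n : ℕ), 0 < n ∧ (n : ℤ) ∣ m ∧
      a ^ (Nat.totient n + s) ≡ a ^ s [ZMOD m] := by
  set M := m.natAbs
  set u := M.gcd (a.natAbs ^ M)
  have hM : 0 < M := Int.natAbs_pos.mpr hm
  have hu : u ∣ M := Nat.gcd_dvd_left _ _
  have hu_pow : (u : ℤ) ∣ a ^ M := by
    rw [Int.natCast_dvd, Int.natAbs_pow]
    exact Nat.gcd_dvd_right _ _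
  have hv : IsCoprime a ↑(M / u) :=
    Int.isCoprime_iff_gcd_eq_one.mpr (Nat.coprime_div_gcd_pow_self hM.ne')
  refine ⟨M, M / u, Nat.div_pos (Nat.le_of_dvd hM hu) (Nat.pos_of_dvd_of_pos hu hM),
    Int.natCast_dvd.mpr (Nat.div_dvd_of_dvd hu), ?_⟩
  have hmod := Int.pow_totient_add_modEq hu_pow hv
  rw [← Nat.cast_mul, Nat.mul_div_cancel' hu] at hmod
  exact hmod.of_dvd (Int.dvd_natAbs.mpr dvd_rfl)
end

section
/- Let a, m be integers with m ≠ 0, d₀ = gcd(a, m) ≠ 1, and m = m₀·d₀. If gcd(d₀, m₀) = 1, then a^(φ(m₀) + 1) ≡ a (mod m). -/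
lemma int_euler (a : ℤ) (n : ℕ) (h : IsCoprime a (n : ℤ)) :
    a ^ n.totient ≡ 1 [ZMOD (n : ℤ)] := by
  have hu : IsUnit ((a : ZMod n)) := by
    obtain ⟨u, v, huv⟩ := h
    refine IsUnit.of_mul_eq_one (u : ZMod n) ?_
    have : ((u * a + v * n : ℤ) : ZMod n) = ((1 : ℤ) : ZMod n) := by rw [huv]
    push_cast at this
    simpa [mul_comm] using this
  have h1 := ZMod.pow_totient hu.unit
  have h2 : ((a : ZMod n)) ^ n.totient = 1 := by
    rw [← hu.unit_spec, ← Units.val_pow_eq_pow_val, h1, Units.val_one]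
  have h3 : (((a ^ n.totient : ℤ)) : ZMod n) = ((1 : ℤ) : ZMod n) := by
    push_cast; simpa using h2
  exact (ZMod.intCast_eq_intCast_iff _ _ _).mp h3

theorem stmt9 (a m : ℤ) (hm : m ≠ 0) (d₀ : ℕ) (hd₀ : d₀ = Int.gcd a m)
    (hne : d₀ ≠ 1) (m₀ : ℤ) (hfac : m = m₀ * d₀)
    (hcop : Int.gcd (d₀ : ℤ) m₀ = 1) :
    a ^ (Nat.totient m₀.natAbs + 1) ≡ a [ZMOD m] := by
  set n := m₀.natAbs with hn
  have hda : (d₀ : ℤ) ∣ a := by rw [hd₀]; exact Int.gcd_dvd_left _ _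
  have hm₀m : m₀ ∣ m := ⟨(d₀ : ℤ), hfac⟩
  -- gcd a m₀ = 1
  have hg1 : Int.gcd a m₀ = 1 := by
    have h1 : (Int.gcd a m₀ : ℤ) ∣ (d₀ : ℤ) := by
      rw [hd₀]
      exact_mod_cast Int.dvd_coe_gcd (Int.gcd_dvd_left _ _) ((Int.gcd_dvd_right _ _).trans hm₀m)
    have h2 := Int.dvd_coe_gcd h1 (Int.gcd_dvd_right _ _ : (Int.gcd a m₀ : ℤ) ∣ m₀)
    rw [hcop] at h2
    have h3 : a.gcd m₀ ∣ 1 := by exact_mod_cast h2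
    exact Nat.eq_one_of_dvd_one h3
  have hcop' : IsCoprime a m₀ := Int.isCoprime_iff_gcd_eq_one.mpr hg1
  -- Euler mod m₀
  have heuler : a ^ n.totient ≡ 1 [ZMOD (n : ℤ)] := by
    apply int_euler
    apply Int.isCoprime_iff_gcd_eq_one.mpr
    simpa [Int.gcd] using hg1
  have hmod1 : a ^ (n.totient + 1) ≡ a [ZMOD m₀] := by
    have : a ^ n.totient * a ≡ 1 * a [ZMOD (n:ℤ)] := heuler.mul_right a
    rw [← pow_succ, one_mul] at this
    have hd : m₀ ∣ a - a ^ (n.totient + 1) := by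
      have := Int.ModEq.dvd this
      rwa [Int.natAbs_dvd] at this
    exact Int.modEq_iff_dvd.mpr hd
  have hmod2 : a ^ (n.totient + 1) ≡ a [ZMOD (d₀ : ℤ)] := by
    apply Int.modEq_iff_dvd.mpr
    have h1 : (d₀ : ℤ) ∣ a ^ (n.totient + 1) := hda.trans (dvd_pow_self a (Nat.succ_ne_zero _))
    exact dvd_sub hda h1
  -- combine
  have hcopn : m₀.natAbs.Coprime ((d₀ : ℤ)).natAbs := by
    have : Int.gcd m₀ (d₀ : ℤ) = 1 := by rw [Int.gcd_comm]; exact hcop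
    exact this
  rw [hfac]
  exact (Int.modEq_and_modEq_iff_modEq_mul hcopn).mp ⟨hmod1, hmod2⟩
end

section
/- Let a be an integer and m a positive integer, with the recursion d₀ = gcd(a,m), mᵢ = m₍ᵢ₋₁₎/dᵢ, d₍ᵢ₊₁₎ = gcd(dᵢ, mᵢ) and s least with d_s = 1. Then gcd(a, m_s) = 1. -/
namespace dm

variable (a : ℤ) (m : ℕ)

theorem fst_succ (i : ℕ) : (dm a m (i + 1)).1 = Nat.gcd (dm a m i).1 (dm a m i).2 := rfl

theorem snd_succ (i : ℕ) : (dm a m (i + 1)).2 = (dm a m i).2 / (dm a m (i + 1)).1 := rfl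

theorem snd_succ_dvd (i : ℕ) : (dm a m (i + 1)).2 ∣ (dm a m i).2 := by
  rw [snd_succ]
  exact Nat.div_dvd_of_dvd (Nat.gcd_dvd_right _ _)

theorem gcd_natAbs_snd_dvd_fst (i : ℕ) :
    Nat.gcd a.natAbs (dm a m i).2 ∣ (dm a m i).1 := by
  induction i with
  | zero => exact Nat.gcd_dvd_gcd_of_dvd_right _ (Nat.div_dvd_of_dvd (Nat.gcd_dvd_right _ _))
  | succ i ih =>
    have hdvd_prev : Nat.gcd a.natAbs (dm a m (i + 1)).2 ∣ Nat.gcd a.natAbs (dm a m i).2 :=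
      Nat.gcd_dvd_gcd_of_dvd_right _ (snd_succ_dvd a m i)
    rw [fst_succ]
    exact Nat.dvd_gcd (hdvd_prev.trans ih) (hdvd_prev.trans (Nat.gcd_dvd_right _ _))

end dm

theorem stmt17_general (a : ℤ) (m : ℕ) (s : ℕ)
    (hs : (dm a m s).1 = 1) :
    Int.gcd a ((dm a m s).2 : ℤ) = 1 :=
  Nat.eq_one_of_dvd_one (hs ▸ dm.gcd_natAbs_snd_dvd_fst a m s)

theorem stmt17 (a : ℤ) (m : ℕ) (hm : 0 < m) (s : ℕ)
    (hs : (dm a m s).1 = 1) (hleast : ∀ t < s, (dm a m t).1 ≠ 1) :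
    Int.gcd a ((dm a m s).2 : ℤ) = 1 :=
  stmt17_general a m s hs
end

section
/- If a, m are integers with m ≠ 0, then there exists a divisor n of m with n > 0 and a natural number s ≤ log₂(|m|) + 1 such that gcd(a, n) = 1 and a^(φ(n)+s) ≡ a^s (mod m). -/
lemma aux18 (A : ℕ) : ∀ M : ℕ, 0 < M →
    ∃ n k s : ℕ, M = n * k ∧ Nat.Coprime A n ∧ Nat.Coprime n k ∧
      k ∣ A ^ s ∧ 2 ^ s ≤ k := by
  intro M
  induction M using Nat.strong_induction_on with
  | _ M ih =>
    intro hM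
    by_cases hd : Nat.gcd A M = 1
    · exact ⟨M, 1, 0, by simp, hd, Nat.coprime_one_right _, by simp, by simp⟩
    · have hdM : Nat.gcd A M ∣ M := Nat.gcd_dvd_right A M
      have hd0 : Nat.gcd A M ≠ 0 := fun h => hM.ne' (Nat.eq_zero_of_gcd_eq_zero_right h)
      have hd1 : 1 < Nat.gcd A M := by omega
      have hM' : M / Nat.gcd A M * Nat.gcd A M = M := Nat.div_mul_cancel hdM
      have hM'lt : M / Nat.gcd A M < M := Nat.div_lt_self hM hd1
      have hM'pos : 0 < M / Nat.gcd A M := by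
        rcases Nat.eq_zero_or_pos (M / Nat.gcd A M) with h | h
        · rw [h] at hM'; omega
        · exact h
      obtain ⟨n, k, s, h1, h2, h3, h4, h5⟩ := ih _ hM'lt hM'pos
      refine ⟨n, k * Nat.gcd A M, s + 1, ?_, h2, ?_, ?_, ?_⟩
      · conv_lhs => rw [← hM', h1]
        ring
      · exact Nat.Coprime.mul_right h3
          (Nat.Coprime.coprime_dvd_right (Nat.gcd_dvd_left A M) h2.symm)
      · rw [pow_succ]
        exact mul_dvd_mul h4 (Nat.gcd_dvd_left A M)
      · rw [pow_succ]
        exact Nat.mul_le_mul h5 hd1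

theorem stmt18 (a m : ℤ) (hm : m ≠ 0) :
    ∃ n : ℕ, (n : ℤ) ∣ m ∧ 0 < n ∧
      ∃ s : ℕ, s ≤ Nat.log 2 m.natAbs + 1 ∧ Int.gcd a n = 1 ∧
        a ^ (Nat.totient n + s) ≡ a ^ s [ZMOD m] := by
  set M := m.natAbs with hMdef
  have hMpos : 0 < M := Int.natAbs_pos.mpr hm
  obtain ⟨n, k, s, h1, h2, h3, h4, h5⟩ := aux18 a.natAbs M hMpos
  have hnk : 0 < n * k := h1 ▸ hMpos
  have hnpos : 0 < n := by
    rcases Nat.eq_zero_or_pos n with h | h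
    · simp [h] at hnk
    · exact h
  haveI : NeZero n := ⟨hnpos.ne'⟩
  have hkM : k ≤ M := Nat.le_of_dvd hMpos ⟨n, by rw [h1]; ring⟩
  refine ⟨n, ?_, hnpos, s, ?_, h2, ?_⟩
  · have hnM : (n : ℤ) ∣ (M : ℤ) := by
      exact_mod_cast Int.natCast_dvd_natCast.mpr ⟨k, h1⟩
    exact hnM.trans (Int.natAbs_dvd.mpr dvd_rfl)
  · have : s ≤ Nat.log 2 M :=
      (Nat.le_log_iff_pow_le one_lt_two hMpos.ne').mpr (h5.trans hkM)
    omega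
  · -- the congruence
    have hdn : (n : ℤ) ∣ a ^ Nat.totient n - 1 := by
      have hu : IsUnit ((a : ℤ) : ZMod n) := by
        have h' : IsUnit ((a.natAbs : ℕ) : ZMod n) :=
          (ZMod.isUnit_iff_coprime _ _).mpr h2
        rcases Int.natAbs_eq a with h | h
        · rw [h, Int.cast_natCast]; exact h'
        · rw [h, Int.cast_neg, Int.cast_natCast]; exact h'.neg
      have h0 : ((a : ℤ) : ZMod n) ^ Nat.totient n = 1 := by
        rw [← hu.unit_spec, ← Units.val_pow_eq_pow_val, ZMod.pow_totient hu.unit,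
          Units.val_one]
      rw [← ZMod.intCast_zmod_eq_zero_iff_dvd]
      push_cast
      rw [h0]
      ring
    have hdk : (k : ℤ) ∣ a ^ s := by
      have h6 : (k : ℤ) ∣ ((a.natAbs : ℤ)) ^ s := by
        exact_mod_cast Int.natCast_dvd_natCast.mpr h4
      exact h6.trans (pow_dvd_pow_of_dvd (Int.natAbs_dvd.mpr dvd_rfl) s)
    have hco : IsCoprime (n : ℤ) (k : ℤ) := Nat.isCoprime_iff_coprime.mpr h3
    have key : (M : ℤ) ∣ a ^ s - a ^ (Nat.totient n + s) := by
      have hMe : (M : ℤ) = (n : ℤ) * k := by exact_mod_cast h1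
      have e : a ^ s - a ^ (Nat.totient n + s) = (1 - a ^ Nat.totient n) * a ^ s := by
        rw [pow_add]; ring
      rw [hMe, e]
      exact hco.mul_dvd
        (dvd_mul_of_dvd_left ((dvd_sub_comm).mp hdn) _)
        (dvd_mul_of_dvd_right hdk _)
    exact (Int.modEq_iff_dvd).mpr (Int.natAbs_dvd.mp key)
end
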